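/- If θ_1,...,θ_n ∈ k_∞ and at least one θ_i is not in k = F_q(T), then there exist infinitely many polynomials x ∈ K such that |x|^{1/n} · max_{1≤i≤n} ‖xθ_i‖ ≤ 1/q. -/

import Mathlib

open FunctionField Multiplicative WithZero

variable (Fq : Type) [Field Fq] [Fintype Fq] [DecidableEq (RatFunc Fq)]

/-- The embedding of the rational function field into its completion at infinity. -/
noncomputable def embR : RatFunc Fq →+* RatFunc.CompletionAtInfty Fq :=
  letI := RatFunc.inftyValued Fq
  UniformSpace.Completion.coeRingHom

/-- The embedding of the polynomial ring `K = Fq[T]` into `k∞`. -/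
noncomputable def embP : Polynomial Fq →+* RatFunc.CompletionAtInfty Fq :=
  (embR Fq).comp (algebraMap (Polynomial Fq) (RatFunc Fq))

/-- The absolute value `|α| = q^{-v(α)}` on `k∞`. -/
noncomputable def vabs (α : RatFunc.CompletionAtInfty Fq) : ℝ :=
  if h : Valued.v α = (0 : WithZero (Multiplicative ℤ)) then 0
  else (Fintype.card Fq : ℝ) ^ (toAdd (unzero h))

/-- The distance `‖α‖` from `α` to the nearest polynomial. -/
noncomputable def pnorm (α : RatFunc.CompletionAtInfty Fq) : ℝ :=
  ⨅ A : Polynomial Fq, vabs Fq (α - embP Fq A)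

/-! Dirichlet's pigeonhole argument. Among the `q^(mn+1)` polynomials `x` of degree `≤ mn`,
two agree in the first `m` digits after the point of every `x θᵢ`, since these digits take only
`q^(mn)` values. Their difference `y` has `|y| ≤ q^(mn)` and `‖y θᵢ‖ ≤ q^(-1-m)`, so
`|y|^(1/n) maxᵢ ‖y θᵢ‖ ≤ q⁻¹`. If `θ_{i₀} ∉ k`, then `‖y θ_{i₀}‖ > 0` for every `y ≠ 0`, while the
construction makes it arbitrarily small; hence infinitely many `y` occur. -/

theorem Fintype.one_lt_card_real (K : Type*) [Fintype K] [Nontrivial K] :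
    (1 : ℝ) < Fintype.card K := by
  exact_mod_cast Fintype.one_lt_card

namespace Polynomial

variable {R : Type*} [Semiring R] [Fintype R]

noncomputable instance (k : ℕ) : Fintype (degreeLT R k) :=
  Fintype.ofEquiv _ (degreeLTEquiv R k).toEquiv.symm

theorem card_degreeLT (k : ℕ) : Fintype.card (degreeLT R k) = Fintype.card R ^ k := by
  rw [Fintype.card_congr (degreeLTEquiv R k).toEquiv, Fintype.card_fun, Fintype.card_fin]

end Polynomial

theorem Set.infinite_of_pos_of_forall_exists_lt {α : Type*} {s : Set α} {g : α → ℝ}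
    (hpos : ∀ x ∈ s, 0 < g x) (hsmall : ∀ ε > 0, ∃ x ∈ s, g x < ε) : s.Infinite := by
  intro hfin
  obtain ⟨x, hx, -⟩ := hsmall 1 one_pos
  obtain ⟨a, ha, hmin⟩ := Set.exists_min_image s g hfin ⟨x, hx⟩
  obtain ⟨b, hb, hlt⟩ := hsmall (g a) (hpos a ha)
  exact (hmin b hb).not_gt hlt

section CompletionAtInfty

open Polynomial

variable {F : Type} [Field F] [DecidableEq (RatFunc F)]

theorem valued_embR (f : RatFunc F) : Valued.v (embR F f) = RatFunc.inftyValuation F f := by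
  let := RatFunc.inftyValued F
  exact Valued.valuedCompletion_apply f

theorem valued_embP {p : Polynomial F} (hp : p ≠ 0) :
    Valued.v (embP F p) = exp (p.natDegree : ℤ) :=
  (valued_embR _).trans (RatFunc.inftyValuation.polynomial F hp)

theorem embP_ne_zero {p : Polynomial F} (hp : p ≠ 0) : embP F p ≠ 0 := by
  rw [← Valuation.ne_zero_iff Valued.v, valued_embP hp]
  exact exp_ne_zero

theorem one_le_valued_embP {p : Polynomial F} (hp : p ≠ 0) : 1 ≤ Valued.v (embP F p) := by
  rw [valued_embP hp, ← exp_zero, exp_le_exp]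
  exact Int.natCast_nonneg _

theorem RatFunc.exists_inftyValuation_sub_algebraMap_le (f : RatFunc F) :
    ∃ P : Polynomial F,
      RatFunc.inftyValuation F (f - algebraMap (Polynomial F) (RatFunc F) P) ≤ exp (-1) := by
  have hd : algebraMap (Polynomial F) (RatFunc F) f.denom ≠ 0 :=
    RatFunc.algebraMap_ne_zero f.denom_ne_zero
  have hsub : f - algebraMap _ _ (f.num /ₘ f.denom) =
      algebraMap (Polynomial F) (RatFunc F) (f.num %ₘ f.denom) / algebraMap _ _ f.denom := by
    have hf := RatFunc.num_div_denom f
    rw [div_eq_iff hd] at hf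
    have hdiv := congrArg (algebraMap (Polynomial F) (RatFunc F))
      (modByMonic_add_div f.num f.denom)
    rw [map_add, map_mul] at hdiv
    rw [eq_div_iff hd]
    linear_combination -hdiv - hf
  refine ⟨f.num /ₘ f.denom, ?_⟩
  rcases eq_or_ne (f.num %ₘ f.denom) 0 with hr | hr
  · simp [hsub, hr]
  rw [hsub, map_div₀, RatFunc.inftyValuation_apply, RatFunc.inftyValuation_apply,
    RatFunc.inftyValuation.polynomial F hr, RatFunc.inftyValuation.polynomial F f.denom_ne_zero,
    ← exp_sub, exp_le_exp]
  have := natDegree_lt_natDegree hr (degree_modByMonic_lt f.num f.monic_denom)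
  omega

theorem exists_valued_sub_embR_le (α : RatFunc.CompletionAtInfty F) (z : ℤ) :
    ∃ f : RatFunc F, Valued.v (α - embR F f) ≤ exp z := by
  let := RatFunc.inftyValued F
  -- spheres of nonzero radius are open, and `RatFunc F` is dense in its completion
  set c := embR F (RatFunc.X ^ z)
  have hc : Valued.v c = exp z := by rw [valued_embR, RatFunc.inftyValuation.X_zpow]
  have hsphere : (fun y ↦ y - α + c) ⁻¹' {y | Valued.v y = Valued.v c} ∈ nhds α := by
    refine ((continuous_sub_right α).add_const c).continuousAt.preimage_mem_nhds ?_
    simpa using Valued.locally_const (x := c) (by rw [hc]; exact exp_ne_zero)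
  obtain ⟨f, hf⟩ := UniformSpace.Completion.denseRange_coe.mem_nhds hsphere
  refine ⟨f, ?_⟩
  calc Valued.v (α - embR F f) = Valued.v (c - (embR F f - α + c)) := by ring_nf
    _ ≤ max (Valued.v c) (Valued.v (embR F f - α + c)) := Valuation.map_sub _ _ _
    _ = exp z := by rw [show Valued.v (embR F f - α + c) = Valued.v c from hf, max_self, hc]

theorem exists_valued_sub_embP_le (α : RatFunc.CompletionAtInfty F) :
    ∃ B : Polynomial F, Valued.v (α - embP F B) ≤ exp (-1) := by
  obtain ⟨f, hf⟩ := exists_valued_sub_embR_le α (-1)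
  obtain ⟨B, hB⟩ := RatFunc.exists_inftyValuation_sub_algebraMap_le f
  refine ⟨B, ?_⟩
  have hsplit : α - embP F B = (α - embR F f) + embR F (f - algebraMap _ _ B) := by
    simp only [embP, RingHom.comp_apply, map_sub]
    ring
  rw [hsplit]
  exact Valuation.map_add_le _ hf (by rwa [valued_embR])

theorem exists_valued_sub_embP_sub_div_le (α : RatFunc.CompletionAtInfty F) (m : ℕ) :
    ∃ B A : Polynomial F, A.degree < m ∧
      Valued.v (α - embP F B - embP F A / embP F (X ^ m)) ≤ exp (-1 - m : ℤ) := by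
  obtain ⟨P, hP⟩ := exists_valued_sub_embP_le (embP F (X ^ m) * α)
  refine ⟨P /ₘ X ^ m, P %ₘ X ^ m, ?_, ?_⟩
  · simpa using degree_modByMonic_lt P (monic_X_pow m)
  have hXm : X ^ m ≠ (0 : Polynomial F) := pow_ne_zero _ X_ne_zero
  have hXm' := embP_ne_zero hXm
  have hdiv := congrArg (embP F) (modByMonic_add_div P (X ^ m))
  rw [map_add, map_mul] at hdiv
  have hsplit : α - embP F (P /ₘ X ^ m) - embP F (P %ₘ X ^ m) / embP F (X ^ m) =
      (embP F (X ^ m) * α - embP F P) / embP F (X ^ m) := by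
    field_simp
    linear_combination -hdiv
  rwa [hsplit, map_div₀, valued_embP hXm, natDegree_X_pow, exp_sub,
    div_le_div_iff_of_pos_right exp_pos]

theorem valued_sub_embP_le_of_le_exp_neg_one {α : RatFunc.CompletionAtInfty F} {B : Polynomial F}
    (hB : Valued.v (α - embP F B) ≤ exp (-1)) (C : Polynomial F) :
    Valued.v (α - embP F B) ≤ Valued.v (α - embP F C) := by
  rcases eq_or_ne C B with rfl | hCB
  · exact le_rfl
  have hlt : Valued.v (α - embP F B) < Valued.v (embP F (C - B)) :=
    hB.trans_lt ((exp_lt_exp.2 (by norm_num)).trans_le (one_le_valued_embP (sub_ne_zero.2 hCB)))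
  have hsplit : α - embP F C = (α - embP F B) - embP F (C - B) := by rw [map_sub]; ring
  rw [hsplit, Valuation.map_sub_eq_of_lt_right _ hlt]
  exact hlt.le

theorem embP_mul_ne_embP {θ : RatFunc.CompletionAtInfty F}
    (hθ : ∀ f : RatFunc F, θ ≠ embR F f) {y : Polynomial F} (hy : y ≠ 0) (C : Polynomial F) :
    embP F y * θ ≠ embP F C := by
  intro h
  apply hθ (algebraMap _ _ C / algebraMap _ _ y)
  rw [map_div₀]
  change θ = embP F C / embP F y
  rw [eq_div_iff (embP_ne_zero hy), mul_comm, h]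

end CompletionAtInfty

section FiniteField

open Polynomial

variable {Fq}

theorem vabs_eq_zpow_log {α : RatFunc.CompletionAtInfty Fq} (h : Valued.v α ≠ 0) :
    vabs Fq α = (Fintype.card Fq : ℝ) ^ log (Valued.v α) := by
  rw [vabs, dif_neg h, toAdd_unzero_eq_log]

theorem vabs_nonneg (α : RatFunc.CompletionAtInfty Fq) : 0 ≤ vabs Fq α := by
  unfold vabs
  split_ifs
  exacts [le_rfl, zpow_nonneg (Nat.cast_nonneg _) _]

theorem vabs_pos {α : RatFunc.CompletionAtInfty Fq} (h : α ≠ 0) : 0 < vabs Fq α := by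
  rw [vabs_eq_zpow_log ((Valuation.ne_zero_iff _).2 h)]
  exact zpow_pos (by positivity) _

theorem vabs_le_zpow {α : RatFunc.CompletionAtInfty Fq} {z : ℤ} (h : Valued.v α ≤ exp z) :
    vabs Fq α ≤ (Fintype.card Fq : ℝ) ^ z := by
  rcases eq_or_ne (Valued.v α) 0 with h0 | h0
  · rw [vabs, dif_pos h0]
    exact zpow_nonneg (Nat.cast_nonneg _) _
  rw [vabs_eq_zpow_log h0]
  exact zpow_le_zpow_right₀ (Fintype.one_lt_card_real Fq).le ((log_le_iff_le_exp h0).2 h)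

theorem vabs_le_vabs {α β : RatFunc.CompletionAtInfty Fq} (h : Valued.v α ≤ Valued.v β) :
    vabs Fq α ≤ vabs Fq β := by
  rcases eq_or_ne (Valued.v β) 0 with h0 | h0
  · rw [h0, le_zero_iff] at h
    rw [vabs, dif_pos h]
    exact vabs_nonneg β
  rw [vabs_eq_zpow_log h0]
  exact vabs_le_zpow (exp_log h0 ▸ h)

theorem pnorm_le_vabs (α : RatFunc.CompletionAtInfty Fq) (C : Polynomial Fq) :
    pnorm Fq α ≤ vabs Fq (α - embP Fq C) :=
  ciInf_le ⟨0, Set.forall_mem_range.2 fun _ ↦ vabs_nonneg _⟩ C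

theorem pnorm_nonneg (α : RatFunc.CompletionAtInfty Fq) : 0 ≤ pnorm Fq α :=
  Real.iInf_nonneg fun _ ↦ vabs_nonneg _

theorem pnorm_pos {α : RatFunc.CompletionAtInfty Fq}
    (h : ∀ C : Polynomial Fq, α ≠ embP Fq C) :
    0 < pnorm Fq α := by
  obtain ⟨B, hB⟩ := exists_valued_sub_embP_le α
  exact (vabs_pos (sub_ne_zero.2 (h B))).trans_le
    (le_ciInf fun C ↦ vabs_le_vabs (valued_sub_embP_le_of_le_exp_neg_one hB C))

theorem exists_simultaneous_approx {n : ℕ} (θ : Fin n → RatFunc.CompletionAtInfty Fq)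
    (m : ℕ) :
    ∃ y : Polynomial Fq, y ≠ 0 ∧ y.natDegree ≤ m * n ∧ ∀ i, ∃ C : Polynomial Fq,
      Valued.v (embP Fq y * θ i - embP Fq C) ≤ exp (-1 - m : ℤ) := by
  choose B A hA hBA using
    fun α : RatFunc.CompletionAtInfty Fq ↦ exists_valued_sub_embP_sub_div_le α m
  -- pigeonhole on the first `m` digits after the point of `x * θ i`, for all `i` at once
  let digits (x : degreeLT Fq (m * n + 1)) (i : Fin n) : degreeLT Fq m :=
    ⟨A (embP Fq x * θ i), mem_degreeLT.2 (hA _)⟩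
  have hcard : Fintype.card (Fin n → degreeLT Fq m) < Fintype.card (degreeLT Fq (m * n + 1)) := by
    rw [Fintype.card_fun, card_degreeLT, card_degreeLT, Fintype.card_fin, ← pow_mul]
    exact Nat.pow_lt_pow_right Fintype.one_lt_card (Nat.lt_succ_self _)
  obtain ⟨x, x', hne, heq⟩ := Fintype.exists_ne_map_eq_of_card_lt digits hcard
  have hy : (x - x' : Polynomial Fq) ≠ 0 := sub_ne_zero.2 (Subtype.coe_injective.ne hne)
  refine ⟨x - x', hy, ?_, fun i ↦ ⟨B (embP Fq x * θ i) - B (embP Fq x' * θ i), ?_⟩⟩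
  · have := (natDegree_lt_iff_degree_lt hy).2 (mem_degreeLT.1 (sub_mem x.2 x'.2))
    omega
  have hAi : A (embP Fq x * θ i) = A (embP Fq x' * θ i) := congrArg Subtype.val (congrFun heq i)
  have hsplit : embP Fq (x - x') * θ i - embP Fq (B (embP Fq x * θ i) - B (embP Fq x' * θ i)) =
      (embP Fq x * θ i - embP Fq (B (embP Fq x * θ i)) -
        embP Fq (A (embP Fq x * θ i)) / embP Fq (X ^ m)) -
      (embP Fq x' * θ i - embP Fq (B (embP Fq x' * θ i)) -
        embP Fq (A (embP Fq x' * θ i)) / embP Fq (X ^ m)) := by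
    rw [hAi, map_sub, map_sub]
    ring
  rw [hsplit]
  exact Valuation.map_sub_le _ (hBA _) (hBA _)

theorem vabs_embP_rpow_le {n m : ℕ} (hn : n ≠ 0) {y : Polynomial Fq} (hy : y ≠ 0)
    (hdeg : y.natDegree ≤ m * n) :
    vabs Fq (embP Fq y) ^ ((1 : ℝ) / n) ≤ (Fintype.card Fq : ℝ) ^ m := by
  have hle : vabs Fq (embP Fq y) ≤ ((Fintype.card Fq : ℝ) ^ m) ^ n := by
    rw [← pow_mul, ← zpow_natCast]
    exact vabs_le_zpow (by rw [valued_embP hy, exp_le_exp]; exact_mod_cast hdeg)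
  calc vabs Fq (embP Fq y) ^ ((1 : ℝ) / n)
      ≤ (((Fintype.card Fq : ℝ) ^ m) ^ n) ^ ((1 : ℝ) / n) :=
        Real.rpow_le_rpow (vabs_nonneg _) hle (by positivity)
    _ = (Fintype.card Fq : ℝ) ^ m := by
        rw [one_div, Real.pow_rpow_inv_natCast (by positivity) hn]

theorem exists_dirichlet_approx {n : ℕ} (hn : n ≠ 0)
    (θ : Fin n → RatFunc.CompletionAtInfty Fq) (m : ℕ) :
    ∃ y : Polynomial Fq, y ≠ 0 ∧
      vabs Fq (embP Fq y) ^ ((1 : ℝ) / n) * (⨆ i, pnorm Fq (embP Fq y * θ i)) ≤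
        (Fintype.card Fq : ℝ)⁻¹ ∧
      ∀ i, pnorm Fq (embP Fq y * θ i) ≤ (Fintype.card Fq : ℝ)⁻¹ ^ (m + 1) := by
  have : Nonempty (Fin n) := Fin.pos_iff_nonempty.1 (Nat.pos_of_ne_zero hn)
  obtain ⟨y, hy, hdeg, hC⟩ := exists_simultaneous_approx θ m
  have hpnorm i : pnorm Fq (embP Fq y * θ i) ≤ (Fintype.card Fq : ℝ)⁻¹ ^ (m + 1) := by
    obtain ⟨C, hyC⟩ := hC i
    refine (pnorm_le_vabs _ C).trans ((vabs_le_zpow hyC).trans_eq ?_)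
    rw [show (-1 - m : ℤ) = -((m + 1 : ℕ) : ℤ) by push_cast; ring, zpow_neg, zpow_natCast,
      inv_pow]
  refine ⟨y, hy, ?_, hpnorm⟩
  have hq : (Fintype.card Fq : ℝ) ≠ 0 := by positivity
  calc vabs Fq (embP Fq y) ^ ((1 : ℝ) / n) * (⨆ i, pnorm Fq (embP Fq y * θ i))
      ≤ (Fintype.card Fq : ℝ) ^ m * (Fintype.card Fq : ℝ)⁻¹ ^ (m + 1) :=
        mul_le_mul (vabs_embP_rpow_le hn hy hdeg) (ciSup_le hpnorm)
          (Real.iSup_nonneg fun _ ↦ pnorm_nonneg _) (by positivity)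
    _ = (Fintype.card Fq : ℝ)⁻¹ := by
        rw [pow_succ, ← mul_assoc, ← mul_pow, mul_inv_cancel₀ hq, one_pow, one_mul]

end FiniteField

theorem stmt9 (n : ℕ) (θ : Fin n → RatFunc.CompletionAtInfty Fq)
    (hθ : ∃ i, ∀ f : RatFunc Fq, θ i ≠ embR Fq f) :
    {x : Polynomial Fq |
      (vabs Fq (embP Fq x)) ^ ((1 : ℝ) / n) * (⨆ i, pnorm Fq (embP Fq x * θ i)) ≤
        (Fintype.card Fq : ℝ)⁻¹}.Infinite := by
  obtain ⟨i₀, hi₀⟩ := hθ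
  have hq : (Fintype.card Fq : ℝ)⁻¹ < 1 :=
    inv_lt_one_of_one_lt₀ (Fintype.one_lt_card_real Fq)
  refine Set.Infinite.mono Set.inter_subset_left <|
    Set.infinite_of_pos_of_forall_exists_lt (s := _ ∩ {x | x ≠ 0})
      (g := fun x ↦ pnorm Fq (embP Fq x * θ i₀))
      (fun x hx ↦ pnorm_pos (embP_mul_ne_embP hi₀ hx.2)) fun ε hε ↦ ?_
  obtain ⟨m, hm⟩ := exists_pow_lt_of_lt_one hε hq
  obtain ⟨y, hy, hyS, hyθ⟩ := exists_dirichlet_approx i₀.pos.ne' θ m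
  exact ⟨y, ⟨hyS, hy⟩,
    ((hyθ i₀).trans (pow_le_pow_of_le_one (by positivity) hq.le m.le_succ)).trans_lt hm⟩
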